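/- Let λ ≠ 0 be a real number with (9+5λ)(1−3λ) < 0. Then the two roots of the quadratic factor q_λ are non-real complex conjugates, and every complex root z of q_λ satisfies |z|² = (1+λ)/(4λ) = 1/4 + 1/(4λ). -/

import Mathlib

/-! The discriminant of `q_λ` is `(9+5λ)(1−3λ)/(16λ²) < 0`. Since `q_λ` has real coefficients it
therefore has no real root, and with every root `z` the distinct number `conj z` is a root too.
By Vieta the product of the two roots, `z * conj z = ‖z‖²`, is the constant term `(1+λ)/(4λ)`. -/

/-- The quadratic factor of the ZeroSNet characteristic polynomial over ℂ (real parameter λ):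
`q_λ(ρ) = ρ² + ((λ−3)/(4λ))ρ + (1+λ)/(4λ)`. -/
noncomputable def zerosQuadFactor (l : ℝ) (ρ : ℂ) : ℂ :=
  ρ ^ 2 + (((l : ℂ) - 3) / (4 * (l : ℂ))) * ρ + (1 + (l : ℂ)) / (4 * (l : ℂ))

theorem mul_eq_of_quadratic_eq_zero_of_ne {R : Type*} [CommRing R] [IsDomain R] {b c z w : R}
    (hz : z ^ 2 + b * z + c = 0) (hw : w ^ 2 + b * w + c = 0) (hne : z ≠ w) : z * w = c := by
  have hfactor : (z - w) * (z + w + b) = 0 := by linear_combination hz - hw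
  have hsum : z + w + b = 0 := (mul_eq_zero.mp hfactor).resolve_left (sub_ne_zero.mpr hne)
  linear_combination z * hsum - hz

namespace Complex

open ComplexConjugate

variable {b c : ℝ} {z : ℂ}

theorem conj_quadratic_eq_zero (hz : z ^ 2 + b * z + c = 0) :
    conj z ^ 2 + b * conj z + c = 0 := by
  simpa only [map_add, map_mul, map_pow, conj_ofReal, map_zero] using congr_arg conj hz

theorem im_ne_zero_of_quadratic_eq_zero (hd : discrim 1 b c < 0)
    (hz : z ^ 2 + b * z + c = 0) : z.im ≠ 0 := by
  intro him
  have hre : z.re ^ 2 + b * z.re + c = 0 := by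
    rw [← re_add_im z, him, ofReal_zero, zero_mul, add_zero] at hz
    exact_mod_cast hz
  have hsq : discrim 1 b c = (2 * 1 * z.re + b) ^ 2 :=
    discrim_eq_sq_of_quadratic_eq_zero (by linear_combination hre)
  exact hd.not_ge (hsq ▸ sq_nonneg _)

theorem sq_norm_eq_of_quadratic_eq_zero (hd : discrim 1 b c < 0)
    (hz : z ^ 2 + b * z + c = 0) : ‖z‖ ^ 2 = c := by
  have hne : z ≠ conj z := fun h =>
    im_ne_zero_of_quadratic_eq_zero hd hz (conj_eq_iff_im.mp h.symm)
  have hprod := mul_eq_of_quadratic_eq_zero_of_ne hz (conj_quadratic_eq_zero hz) hne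
  rw [mul_conj, ← Complex.sq_norm] at hprod
  exact_mod_cast hprod

end Complex

theorem zerosQuadFactor_eq (l : ℝ) (ρ : ℂ) :
    zerosQuadFactor l ρ = ρ ^ 2 + ((l - 3) / (4 * l) : ℝ) * ρ + ((1 + l) / (4 * l) : ℝ) := by
  push_cast
  rfl

theorem discrim_zerosQuadFactor {l : ℝ} (hl : l ≠ 0) :
    discrim 1 ((l - 3) / (4 * l)) ((1 + l) / (4 * l)) =
      (9 + 5 * l) * (1 - 3 * l) / (16 * l ^ 2) := by
  rw [discrim]
  field_simp
  ring

theorem zerosnet_complex_roots_modulus_general (l : ℝ)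
    (hd : (9 + 5 * l) * (1 - 3 * l) < 0) :
    (∀ z : ℂ, zerosQuadFactor l z = 0 →
      z.im ≠ 0 ∧ zerosQuadFactor l (starRingEnd ℂ z) = 0) ∧
    (∀ z : ℂ, zerosQuadFactor l z = 0 → ‖z‖ ^ 2 = (1 + l) / (4 * l)) ∧
    (1 + l) / (4 * l) = 1 / 4 + 1 / (4 * l) := by
  have hl : l ≠ 0 := by rintro rfl; norm_num at hd
  have hdisc : discrim 1 ((l - 3) / (4 * l)) ((1 + l) / (4 * l)) < 0 := by
    rw [discrim_zerosQuadFactor hl]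
    exact div_neg_of_neg_of_pos hd (by positivity)
  simp only [zerosQuadFactor_eq]
  refine ⟨fun z hz => ⟨Complex.im_ne_zero_of_quadratic_eq_zero hdisc hz,
      Complex.conj_quadratic_eq_zero hz⟩,
    fun z hz => Complex.sq_norm_eq_of_quadratic_eq_zero hdisc hz, by field_simp; ring⟩

/-- If `(9+5λ)(1−3λ) < 0`, the roots of the quadratic factor `q_λ` are non-real complex
conjugates, and every complex root `z` of `q_λ` satisfies
`|z|² = (1+λ)/(4λ) = 1/4 + 1/(4λ)`. -/
theorem zerosnet_complex_roots_modulus (l : ℝ) (hl : l ≠ 0)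
    (hd : (9 + 5 * l) * (1 - 3 * l) < 0) :
    (∀ z : ℂ, zerosQuadFactor l z = 0 →
      z.im ≠ 0 ∧ zerosQuadFactor l (starRingEnd ℂ z) = 0) ∧
    (∀ z : ℂ, zerosQuadFactor l z = 0 → ‖z‖ ^ 2 = (1 + l) / (4 * l)) ∧
    (1 + l) / (4 * l) = 1 / 4 + 1 / (4 * l) :=
  zerosnet_complex_roots_modulus_general l hd
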